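/- Consider dynA* with a dyn-safe dynamic heuristic in iteration i. Let s be a state settled in iteration i and let s' be a state with h*(s') < ∞ such that there is an optimal path ⟨t_1,…,t_n⟩ from s_I to s' with t_n = (s, ℓ, s'), i.e., s' can be reached optimally through s. Then at the beginning of iteration i, the open queue contains an entry (s', g, ·) with g = g*(s'), or s' is settled in iteration i. -/

import Mathlib

open scoped ENNReal Classical

/-! ## Transition systems -/

/-- A labeled transition: (origin, label, target). -/
abbrev Tran (S L : Type) := S × L × S

/-- A transition system with states `S`, labels `L`, a cost function,
a set of labeled transitions, an initial state and a set of goal states. -/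
structure TransSys (S L : Type) where
  cost : L → NNReal
  trans : Set (Tran S L)
  init : S
  goal : Set S

namespace TransSys

variable {S L : Type}

/-- `IsPathFrom ts s π s'`: `π` is a path from `s` to `s'` in `ts`. -/
inductive IsPathFrom (ts : TransSys S L) : S → List (Tran S L) → S → Prop
  | nil (s : S) : IsPathFrom ts s [] s
  | cons {s m e : S} {l : L} {π : List (Tran S L)} :
      (s, l, m) ∈ ts.trans → IsPathFrom ts m π e → IsPathFrom ts s ((s, l, m) :: π) e

/-- The cost of a path: sum of the costs of its labels. -/
def pathCost (ts : TransSys S L) (π : List (Tran S L)) : NNReal :=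
  (π.map fun t => ts.cost t.2.1).sum

/-- A state is reachable if there is a path from the initial state to it. -/
def Reachable (ts : TransSys S L) (s : S) : Prop := ∃ π, ts.IsPathFrom ts.init π s

/-- A solution is a path from the initial state to a goal state. -/
def Solution (ts : TransSys S L) (π : List (Tran S L)) : Prop :=
  ∃ s ∈ ts.goal, ts.IsPathFrom ts.init π s

def Solvable (ts : TransSys S L) : Prop := ∃ π, ts.Solution π

/-- `h*`: minimal cost of a path from `s` to a goal state (`∞` if none exists). -/
noncomputable def hstar (ts : TransSys S L) (s : S) : ℝ≥0∞ :=
  sInf {x : ℝ≥0∞ | ∃ π, ∃ g ∈ ts.goal, ts.IsPathFrom s π g ∧ x = (ts.pathCost π : ℝ≥0∞)}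

/-- `g*`: minimal cost of a path from the initial state to `s` (`∞` if none exists). -/
noncomputable def gstar (ts : TransSys S L) (s : S) : ℝ≥0∞ :=
  sInf {x : ℝ≥0∞ | ∃ π, ts.IsPathFrom ts.init π s ∧ x = (ts.pathCost π : ℝ≥0∞)}

end TransSys

/-! ## Information sources and dynamic heuristics -/

/-- An information source for a transition system (Definition 1). -/
structure InfoSource {S L : Type} (ts : TransSys S L) (I : Type) where
  initInfo : I
  update : I → Tran S L → I
  refine : I → S → I

namespace InfoSource

variable {S L I : Type} {ts : TransSys S L}

/-- `ReachWith σ i K`: information object `i` is obtained from the initial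
information by updates/refinements, where `K` is the set consisting of the
initial state together with all targets of used transitions, every refined state
lies in `K`, and the origin of every used transition lies in `K` (Definition 2). -/
inductive ReachWith (σ : InfoSource ts I) : I → Set S → Prop
  | base : ReachWith σ σ.initInfo {ts.init}
  | update {i : I} {K : Set S} {t : Tran S L} :
      ReachWith σ i K → t ∈ ts.trans → t.1 ∈ K →
      ReachWith σ (σ.update i t) (insert t.2.2 K)
  | refine {i : I} {K : Set S} {s : S} :
      ReachWith σ i K → s ∈ K → ReachWith σ (σ.refine i s) K

/-- An information object is reachable (Definition 2). -/
def ReachableInfo (σ : InfoSource ts I) (i : I) : Prop := ∃ K, σ.ReachWith i K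

end InfoSource

section HeuristicProps

variable {S L I : Type} (ts : TransSys S L) (σ : InfoSource ts I) (h : S → I → ℝ≥0∞)

def DynSafe : Prop := ∀ (s : S) (i : I), σ.ReachableInfo i → h s i = ⊤ → ts.hstar s = ⊤

def DynAdmissible : Prop := ∀ (s : S) (i : I), σ.ReachableInfo i → h s i ≤ ts.hstar s

def DynConsistent : Prop :=
  ∀ t ∈ ts.trans, ∀ i : I, σ.ReachableInfo i →
    h t.1 i ≤ (ts.cost t.2.1 : ℝ≥0∞) + h t.2.2 i

def DynGoalAware : Prop := ∀ s ∈ ts.goal, ∀ i : I, σ.ReachableInfo i → h s i = 0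

def DynMonotonic : Prop :=
  ∀ i : I, σ.ReachableInfo i →
    (∀ s : S, ∀ t ∈ ts.trans, h s i ≤ h s (σ.update i t)) ∧
    (∀ s s' : S, h s i ≤ h s (σ.refine i s'))

end HeuristicProps

/-! ## Progression sources -/

/-- A progression source (Definition 5). -/
structure ProgSource {S L : Type} (ts : TransSys S L) (J : Type) where
  initJ : J
  progress : J → Tran S L → J
  merge : J → J → J

/-- The progression-based information source built on a progression source
(Definition 7): per-state information, updated by progressing along a
transition and merging with existing information at the target. -/
noncomputable def progInfoSource {S L J : Type} (ts : TransSys S L) (p : ProgSource ts J) :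
    InfoSource ts (S → Option J) where
  initInfo := fun x => if x = ts.init then some p.initJ else none
  update := fun i t => fun x =>
    if x = t.2.2 then
      match i t.1 with
      | none => i t.2.2
      | some j =>
        match i t.2.2 with
        | none => some (p.progress j t)
        | some j' => some (p.merge (p.progress j t) j')
    else i x
  refine := fun i _ => i

/-- The parent source (Definition 6): per-state `g`-values and parent pointers. -/
noncomputable def parentSource {S L : Type} (ts : TransSys S L) :
    ProgSource ts (NNReal × Option (Tran S L)) where
  initJ := (0, none)
  progress := fun j t => (j.1 + ts.cost t.2.1, some t)
  merge := fun a b => if a.1 ≤ b.1 then a else b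

/-- `ParentChain par s π`: `π` is the sequence of transitions obtained by
following parent pointers backwards from `s` until a state whose stored
pointer is `⊥` (read forwards). -/
inductive ParentChain {S L : Type} (par : S → Option (NNReal × Option (Tran S L))) :
    S → List (Tran S L) → Prop
  | nil {s : S} {g : NNReal} : par s = some (g, none) → ParentChain par s []
  | cons {g : NNReal} {t : Tran S L} {π : List (Tran S L)} :
      par t.2.2 = some (g, some t) → ParentChain par t.1 π →
      ParentChain par t.2.2 (π ++ [t])

/-! ## The dynamic heuristic search framework (Algorithm 1) -/

/-- A configuration of the framework: the known states and one information
object per information source. -/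
structure FConfig (S : Type) {ι : Type} (I : ι → Type) where
  known : Set S
  infos : ∀ k, I k

/-- The (non-terminating) operations of the framework. -/
inductive FOp where
  | genUnknown
  | genKnown
  | refineOp
deriving DecidableEq

section Framework

variable {S L ι : Type} {I : ι → Type} (ts : TransSys S L) (σ : ∀ k, InfoSource ts (I k))

/-- One step of the framework, labeled by the operation performed. -/
inductive FStep : FConfig S I → FOp → FConfig S I → Prop
  | genUnknown {c : FConfig S I} {t : Tran S L} :
      t ∈ ts.trans → t.1 ∈ c.known → t.2.2 ∉ c.known →
      FStep c .genUnknown ⟨insert t.2.2 c.known, fun k => (σ k).update (c.infos k) t⟩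
  | genKnown {c : FConfig S I} {t : Tran S L} :
      t ∈ ts.trans → t.1 ∈ c.known → t.2.2 ∈ c.known →
      FStep c .genKnown ⟨c.known, fun k => (σ k).update (c.infos k) t⟩
  | refineStep {c : FConfig S I} {s : S} :
      s ∈ c.known →
      FStep c .refineOp ⟨c.known, fun k => (σ k).refine (c.infos k) s⟩

/-- The initial configuration of the framework. -/
def initFConfig : FConfig S I := ⟨{ts.init}, fun k => (σ k).initInfo⟩

/-- A configuration occurring in some finite execution of the framework. -/
def FReach (c : FConfig S I) : Prop :=
  Relation.ReflTransGen (fun a b => ∃ op, FStep ts σ a op b) (initFConfig ts σ) c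

/-- Applicability of the gen-unknown operation. -/
def GenUnknownApp (c : FConfig S I) : Prop :=
  ∃ t ∈ ts.trans, t.1 ∈ c.known ∧ t.2.2 ∉ c.known

/-- Applicability of decl-solvable: a goal state is known. -/
def DeclSolvableApp (c : FConfig S I) : Prop := ∃ s ∈ c.known, s ∈ ts.goal

/-- Applicability of decl-unsolvable: no goal state is known and
no transition leaves the known states. -/
def DeclUnsolvableApp (c : FConfig S I) : Prop :=
  (∀ s ∈ c.known, s ∉ ts.goal) ∧ ¬ GenUnknownApp ts c

end Framework

/-! ## dynA* (Algorithm 2) -/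

/-- An open-list entry: (state, g-entry, h-entry). -/
abbrev Entry (S : Type) := S × NNReal × ℝ≥0∞

/-- The f-value of an open-list entry. -/
noncomputable def fval {S : Type} (en : Entry S) : ℝ≥0∞ := (en.2.1 : ℝ≥0∞) + en.2.2

/-- A configuration of dynA*: known states, closed set, open queue, the parent
information (g-values and parent pointers, i.e. the information of σ_p) and the
information object of the heuristic's source σ_h. -/
structure AConfig (S L I : Type) where
  known : Set S
  closed : Set S
  openq : Multiset (Entry S)
  par : S → Option (NNReal × Option (Tran S L))
  info : I

/-- The g-value currently stored for a state. -/
noncomputable def gOf {S L I : Type} (c : AConfig S L I) (s : S) : NNReal :=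
  ((c.par s).map Prod.fst).getD 0

section DynAStar

variable {S L I : Type} (ts : TransSys S L) (σh : InfoSource ts I) (h : S → I → ℝ≥0∞)

/-- Updating the parent information along a transition `t` (the update of the
progression-based parent source σ_p): the target's pair becomes
`(g(origin)+cost, t)` unless the previously stored g-value is smaller. -/
noncomputable def parUpd (par : S → Option (NNReal × Option (Tran S L))) (t : Tran S L) :
    S → Option (NNReal × Option (Tran S L)) := fun x =>
  if x = t.2.2 then
    match par t.1 with
    | none => par t.2.2
    | some (g, _) =>
      match par t.2.2 with
      | none => some (g + ts.cost t.2.1, some t)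
      | some (g', p') =>
          if g + ts.cost t.2.1 ≤ g' then some (g + ts.cost t.2.1, some t)
          else some (g', p')
  else par x

/-- Processing one successor transition `t = (s, ℓ, s')` during the expansion of
`s`: record the old g-value (undefined iff `s'` unknown), update both information
objects along `t`, add `s'` to the known states, and insert `(s', g(s'), h(s'))`
into the open queue if `h(s') < ∞` and `s'` is new or reached more cheaply
(removing `s'` from closed in the latter case: reopening). -/
noncomputable def procSucc (c : AConfig S L I) (t : Tran S L) : AConfig S L I :=
  let oldg : Option NNReal := if t.2.2 ∈ c.known then some (gOf c t.2.2) else none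
  let par' := parUpd ts c.par t
  let info' := σh.update c.info t
  let c' : AConfig S L I :=
    { known := insert t.2.2 c.known, closed := c.closed, openq := c.openq,
      par := par', info := info' }
  let gnew : NNReal := ((par' t.2.2).map Prod.fst).getD 0
  let hnew : ℝ≥0∞ := h t.2.2 info'
  if hnew = ⊤ then c'
  else
    match oldg with
    | none => { c' with openq := (t.2.2, gnew, hnew) ::ₘ c.openq }
    | some go =>
      if gnew < go then
        { c' with closed := c.closed \ {t.2.2},
                  openq := (t.2.2, gnew, hnew) ::ₘ c.openq }
      else c'

/-- Expanding a state: process all its successor transitions in order. -/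
noncomputable def expandAll (c : AConfig S L I) (l : List (Tran S L)) : AConfig S L I :=
  l.foldl (procSucc ts σh h) c

/-- `l` enumerates (without repetition) exactly the transitions with origin `s`. -/
def SuccList (s : S) (l : List (Tran S L)) : Prop :=
  l.Nodup ∧ ∀ t : Tran S L, t ∈ l ↔ t ∈ ts.trans ∧ t.1 = s

/-- Labels recording what happened in one iteration of dynA*. -/
inductive ALab (S L : Type) where
  | dup (en : Entry S)
  | reev (en : Entry S)
  | expand (en : Entry S)
  | retGoal (en : Entry S) (π : List (Tran S L))
  | unsolv

/-- The entry popped from the open queue in an iteration, if any. -/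
def popped {S L : Type} : ALab S L → Option (Entry S)
  | .dup en => some en
  | .reev en => some en
  | .expand en => some en
  | .retGoal en _ => some en
  | .unsolv => none

/-- The outcome of one iteration of dynA*. -/
inductive AOut (S L I : Type) where
  | cont (c : AConfig S L I)
  | retPath (π : List (Tran S L))
  | unsolvable

/-- One iteration of dynA* (Algorithm 2), with optional re-evaluation.
An entry of minimal f-value is popped; duplicates (closed states) are discarded;
otherwise both information objects are refined on the popped state (σ_p's refine
is the identity, so `par` is unchanged); with `reeval` set, a state whose
heuristic value increased is re-inserted instead of expanded; expanding a goal
state returns the path obtained by following parent pointers; expanding a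
non-goal state processes all its successor transitions. If the open queue is
empty, 'unsolvable' is returned. -/
inductive AStep (reeval : Bool) : AConfig S L I → ALab S L → AOut S L I → Prop
  | dup {c : AConfig S L I} {en : Entry S} {rest : Multiset (Entry S)} :
      c.openq = en ::ₘ rest → (∀ en' ∈ c.openq, fval en ≤ fval en') →
      en.1 ∈ c.closed →
      AStep reeval c (.dup en) (.cont { c with openq := rest })
  | reevFin {c : AConfig S L I} {en : Entry S} {rest : Multiset (Entry S)} :
      c.openq = en ::ₘ rest → (∀ en' ∈ c.openq, fval en ≤ fval en') →
      en.1 ∉ c.closed → reeval = true →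
      en.2.2 < h en.1 (σh.refine c.info en.1) →
      h en.1 (σh.refine c.info en.1) ≠ ⊤ →
      AStep reeval c (.reev en)
        (.cont { c with info := σh.refine c.info en.1,
                        openq := (en.1, gOf c en.1, h en.1 (σh.refine c.info en.1)) ::ₘ rest })
  | reevInf {c : AConfig S L I} {en : Entry S} {rest : Multiset (Entry S)} :
      c.openq = en ::ₘ rest → (∀ en' ∈ c.openq, fval en ≤ fval en') →
      en.1 ∉ c.closed → reeval = true →
      en.2.2 < h en.1 (σh.refine c.info en.1) →
      h en.1 (σh.refine c.info en.1) = ⊤ →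
      AStep reeval c (.reev en)
        (.cont { c with info := σh.refine c.info en.1, openq := rest })
  | retGoal {c : AConfig S L I} {en : Entry S} {rest : Multiset (Entry S)}
      {π : List (Tran S L)} :
      c.openq = en ::ₘ rest → (∀ en' ∈ c.openq, fval en ≤ fval en') →
      en.1 ∉ c.closed →
      ¬(reeval = true ∧ en.2.2 < h en.1 (σh.refine c.info en.1)) →
      en.1 ∈ ts.goal → ParentChain c.par en.1 π →
      AStep reeval c (.retGoal en π) (.retPath π)
  | expand {c : AConfig S L I} {en : Entry S} {rest : Multiset (Entry S)}
      {l : List (Tran S L)} :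
      c.openq = en ::ₘ rest → (∀ en' ∈ c.openq, fval en ≤ fval en') →
      en.1 ∉ c.closed →
      ¬(reeval = true ∧ en.2.2 < h en.1 (σh.refine c.info en.1)) →
      en.1 ∉ ts.goal → SuccList ts en.1 l →
      AStep reeval c (.expand en)
        (.cont (expandAll ts σh h
          { c with openq := rest, closed := insert en.1 c.closed,
                   info := σh.refine c.info en.1 } l))
  | unsolv {c : AConfig S L I} :
      c.openq = 0 → AStep reeval c .unsolv .unsolvable

/-- The initial configuration of dynA*. -/
noncomputable def initAConfig : AConfig S L I where
  known := {ts.init}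
  closed := ∅
  openq :=
    if h ts.init σh.initInfo = ⊤ then 0 else {(ts.init, 0, h ts.init σh.initInfo)}
  par := fun x => if x = ts.init then some (0, none) else none
  info := σh.initInfo

/-- `IsExec ts σh h reeval e lab N`: `e 0, …, e N` are the configurations at the
beginnings of the iterations of an execution of dynA*, with `lab n` recording what
happened in iteration `n`. -/
def IsExec (reeval : Bool) (e : ℕ → AConfig S L I) (lab : ℕ → ALab S L) (N : ℕ) : Prop :=
  e 0 = initAConfig ts σh h ∧
  ∀ n < N, AStep ts σh h reeval (e n) (lab n) (.cont (e (n + 1)))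

/-- A state `s` is settled at iteration `n` if it was expanded in some earlier
iteration at whose beginning its stored g-value was `g*(s)`. -/
def SettledAt (e : ℕ → AConfig S L I) (lab : ℕ → ALab S L) (n : ℕ) (s : S) : Prop :=
  ∃ m < n, ∃ en : Entry S, lab m = .expand en ∧ en.1 = s ∧
    (gOf (e m) s : ℝ≥0∞) = ts.gstar s

/-- Iterated refinement of an information object on a fixed state. -/
def refIter (i : I) (s : S) : ℕ → I
  | 0 => i
  | n + 1 => σh.refine (refIter i s n) s

end DynAStar

namespace Stmt9Aux

open TransSys

variable {S L I : Type} (ts : TransSys S L) (σh : InfoSource ts I) (h : S → I → ℝ≥0∞)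

lemma pathCost_append (π π' : List (Tran S L)) :
    ts.pathCost (π ++ π') = ts.pathCost π + ts.pathCost π' := by
  simp [TransSys.pathCost]

lemma gstar_le_pathCost {x : S} {π : List (Tran S L)} (hp : ts.IsPathFrom ts.init π x) :
    ts.gstar x ≤ (ts.pathCost π : ℝ≥0∞) := sInf_le ⟨π, hp, rfl⟩

lemma gstar_init_le : ts.gstar ts.init ≤ 0 := by
  have := gstar_le_pathCost ts (TransSys.IsPathFrom.nil (ts := ts) ts.init)
  simpa [TransSys.pathCost] using this

lemma isPathFrom_append_split {a b : S} {π π' : List (Tran S L)}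
    (hp : ts.IsPathFrom a (π ++ π') b) :
    ∃ m, ts.IsPathFrom a π m ∧ ts.IsPathFrom m π' b := by
  induction π generalizing a with
  | nil => exact ⟨a, .nil a, by simpa using hp⟩
  | cons t rest ih =>
    cases hp with
    | cons htr hrest =>
      obtain ⟨m, h1, h2⟩ := ih hrest
      exact ⟨m, .cons htr h1, h2⟩

lemma isPathFrom_extend {a m b : S} {l : L} {π : List (Tran S L)}
    (h1 : ts.IsPathFrom a π m) (h2 : (m, l, b) ∈ ts.trans) :
    ts.IsPathFrom a (π ++ [(m, l, b)]) b := by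
  induction h1 with
  | nil s => exact .cons h2 (.nil b)
  | cons htr _ ih => exact .cons htr (ih h2)

/-- Triangle inequality for `g*`. -/
lemma gstar_step {t : Tran S L} (ht : t ∈ ts.trans) :
    ts.gstar t.2.2 ≤ ts.gstar t.1 + (ts.cost t.2.1 : ℝ≥0∞) := by
  conv_rhs => rw [TransSys.gstar, ENNReal.sInf_add]
  refine le_iInf₂ fun b hb => ?_
  obtain ⟨π, hp, rfl⟩ := hb
  have : ts.IsPathFrom ts.init (π ++ [(t.1, t.2.1, t.2.2)]) t.2.2 :=
    isPathFrom_extend ts hp (by simpa using ht)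
  calc ts.gstar t.2.2 ≤ (ts.pathCost (π ++ [(t.1, t.2.1, t.2.2)]) : ℝ≥0∞) :=
        gstar_le_pathCost ts this
    _ = (ts.pathCost π : ℝ≥0∞) + (ts.cost t.2.1 : ℝ≥0∞) := by
        rw [pathCost_append]; push_cast [TransSys.pathCost]; simp

end Stmt9Aux

namespace Stmt9Aux

variable {S L I : Type} (ts : TransSys S L) (σh : InfoSource ts I) (h : S → I → ℝ≥0∞)

/-- Open queue has an entry for `x` with optimal g-value. -/
def OpenOpt (c : AConfig S L I) (x : S) : Prop :=
  ∃ g hv, (x, g, hv) ∈ c.openq ∧ (g : ℝ≥0∞) = ts.gstar x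

/-- The master invariant, parameterized by a predicate `SET` (meant to be
"settled"). -/
structure Inv (c : AConfig S L I) (SET : S → Prop) : Prop where
  reach : ∃ K, σh.ReachWith c.info K ∧ c.known ⊆ K
  openKnown : ∀ en ∈ c.openq, en.1 ∈ c.known
  parDom : ∀ x : S, (c.par x).isSome ↔ x ∈ c.known
  parGe : ∀ x : S, ∀ g p, c.par x = some (g, p) → ts.gstar x ≤ (g : ℝ≥0∞)
  closedKnown : c.closed ⊆ c.known
  main : ∀ x ∈ c.known, ts.hstar x ≠ ⊤ → (gOf c x : ℝ≥0∞) = ts.gstar x →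
    (x ∈ c.closed ∧ SET x) ∨ (x ∉ c.closed ∧ OpenOpt ts c x)

lemma gOf_eq_of_par {c : AConfig S L I} {x : S} {g : NNReal} {p}
    (hp : c.par x = some (g, p)) : gOf c x = g := by simp [gOf, hp, Option.getD]

lemma parUpd_ne {par : S → Option (NNReal × Option (Tran S L))} {t : Tran S L} {x : S}
    (hx : x ≠ t.2.2) : parUpd ts par t x = par x := by simp [parUpd, hx]

lemma parUpd_target_new {par : S → Option (NNReal × Option (Tran S L))} {t : Tran S L}
    {a : NNReal} {p} (h1 : par t.1 = some (a, p)) (h2 : par t.2.2 = none) :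
    parUpd ts par t t.2.2 = some (a + ts.cost t.2.1, some t) := by
  simp [parUpd, h1, h2]

lemma parUpd_target_old {par : S → Option (NNReal × Option (Tran S L))} {t : Tran S L}
    {a g' : NNReal} {p p'} (h1 : par t.1 = some (a, p)) (h2 : par t.2.2 = some (g', p')) :
    parUpd ts par t t.2.2 =
      if a + ts.cost t.2.1 ≤ g' then some (a + ts.cost t.2.1, some t) else some (g', p') := by
  simp only [parUpd, if_pos rfl, h1, h2]; simp

end Stmt9Aux

namespace Stmt9Aux

variable {S L I : Type} (ts : TransSys S L) (σh : InfoSource ts I) (h : S → I → ℝ≥0∞)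

/-- The g-value stored at the target after the parent update. -/
noncomputable def gNew (c : AConfig S L I) (t : Tran S L) : NNReal :=
  ((parUpd ts c.par t t.2.2).map Prod.fst).getD 0

lemma procSucc_eq_top {c : AConfig S L I} {t : Tran S L}
    (htop : h t.2.2 (σh.update c.info t) = ⊤) :
    procSucc ts σh h c t =
      ⟨insert t.2.2 c.known, c.closed, c.openq, parUpd ts c.par t, σh.update c.info t⟩ := by
  simp [procSucc, htop]

lemma procSucc_eq_new {c : AConfig S L I} {t : Tran S L}
    (hnt : h t.2.2 (σh.update c.info t) ≠ ⊤) (hk : t.2.2 ∉ c.known) :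
    procSucc ts σh h c t =
      ⟨insert t.2.2 c.known, c.closed,
        (t.2.2, gNew ts c t, h t.2.2 (σh.update c.info t)) ::ₘ c.openq,
        parUpd ts c.par t, σh.update c.info t⟩ := by
  simp [procSucc, hnt, hk, gNew, -ENNReal.none_eq_top]

lemma procSucc_eq_lt {c : AConfig S L I} {t : Tran S L}
    (hnt : h t.2.2 (σh.update c.info t) ≠ ⊤) (hk : t.2.2 ∈ c.known)
    (hlt : gNew ts c t < gOf c t.2.2) :
    procSucc ts σh h c t =
      ⟨insert t.2.2 c.known, c.closed \ {t.2.2},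
        (t.2.2, gNew ts c t, h t.2.2 (σh.update c.info t)) ::ₘ c.openq,
        parUpd ts c.par t, σh.update c.info t⟩ := by
  simp [procSucc, hnt, hk, gNew] at hlt ⊢; simp [hlt]

lemma procSucc_eq_ge {c : AConfig S L I} {t : Tran S L}
    (hnt : h t.2.2 (σh.update c.info t) ≠ ⊤) (hk : t.2.2 ∈ c.known)
    (hge : ¬ gNew ts c t < gOf c t.2.2) :
    procSucc ts σh h c t =
      ⟨insert t.2.2 c.known, c.closed, c.openq, parUpd ts c.par t, σh.update c.info t⟩ := by
  simp [procSucc, hnt, hk, gNew] at hge ⊢; simp [hge]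

end Stmt9Aux

namespace Stmt9Aux

variable {S L I : Type} (ts : TransSys S L) (σh : InfoSource ts I) (h : S → I → ℝ≥0∞)

lemma procSucc_fields (c : AConfig S L I) (t : Tran S L) :
    (procSucc ts σh h c t).known = insert t.2.2 c.known ∧
    (procSucc ts σh h c t).par = parUpd ts c.par t ∧
    (procSucc ts σh h c t).info = σh.update c.info t ∧
    (procSucc ts σh h c t).closed ⊆ c.closed ∧
    c.closed \ {t.2.2} ⊆ (procSucc ts σh h c t).closed ∧
    c.openq ≤ (procSucc ts σh h c t).openq ∧
    (∀ en ∈ (procSucc ts σh h c t).openq, en ∈ c.openq ∨ en.1 = t.2.2) := by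
  by_cases htop : h t.2.2 (σh.update c.info t) = ⊤
  · rw [procSucc_eq_top ts σh h htop]
    refine ⟨rfl, rfl, rfl, le_refl _, Set.diff_subset, le_refl _, fun en hen => Or.inl hen⟩
  · by_cases hk : t.2.2 ∈ c.known
    · by_cases hlt : gNew ts c t < gOf c t.2.2
      · rw [procSucc_eq_lt ts σh h htop hk hlt]
        refine ⟨rfl, rfl, rfl, Set.diff_subset, le_refl _, Multiset.le_cons_self _ _,
          fun en hen => ?_⟩
        rcases Multiset.mem_cons.mp hen with h' | h'
        · exact Or.inr (by rw [h'])
        · exact Or.inl h'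
      · rw [procSucc_eq_ge ts σh h htop hk hlt]
        refine ⟨rfl, rfl, rfl, le_refl _, Set.diff_subset, le_refl _, fun en hen => Or.inl hen⟩
    · rw [procSucc_eq_new ts σh h htop hk]
      refine ⟨rfl, rfl, rfl, le_refl _, Set.diff_subset, Multiset.le_cons_self _ _,
        fun en hen => ?_⟩
      rcases Multiset.mem_cons.mp hen with h' | h'
      · exact Or.inr (by rw [h'])
      · exact Or.inl h'

lemma gNew_le {c : AConfig S L I} {t : Tran S L} {a go : NNReal} {p p'}
    (h1 : c.par t.1 = some (a, p)) (h2 : c.par t.2.2 = some (go, p')) :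
    gNew ts c t ≤ go := by
  rw [gNew, parUpd_target_old ts h1 h2]
  split <;> simp [Option.map_some, Option.getD_some, -ENNReal.some_eq_coe] <;> first | assumption | exact le_of_eq rfl

lemma gNew_eq_cand_of_none {c : AConfig S L I} {t : Tran S L} {a : NNReal} {p}
    (h1 : c.par t.1 = some (a, p)) (h2 : c.par t.2.2 = none) :
    gNew ts c t = a + ts.cost t.2.1 := by
  rw [gNew, parUpd_target_new ts h1 h2]; rfl

end Stmt9Aux

namespace Stmt9Aux

variable {S L I : Type} (ts : TransSys S L) (σh : InfoSource ts I) (h : S → I → ℝ≥0∞)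

lemma parUpd_target_some {c : AConfig S L I} {t : Tran S L} {a : NNReal} {p}
    (h1 : c.par t.1 = some (a, p)) :
    ∃ q, parUpd ts c.par t t.2.2 = some (gNew ts c t, q) := by
  cases h2 : c.par t.2.2 with
  | none =>
    refine ⟨some t, ?_⟩
    rw [parUpd_target_new ts h1 h2, gNew_eq_cand_of_none ts h1 h2]
  | some z =>
    obtain ⟨go, p'⟩ := z
    rw [gNew, parUpd_target_old ts h1 h2]
    split <;> exact ⟨_, rfl⟩

lemma gNew_ge {c : AConfig S L I} {t : Tran S L} {a : NNReal} {p}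
    (ht : t ∈ ts.trans) (h1 : c.par t.1 = some (a, p))
    (hge : ∀ x : S, ∀ g p, c.par x = some (g, p) → ts.gstar x ≤ (g : ℝ≥0∞)) :
    ts.gstar t.2.2 ≤ (gNew ts c t : ℝ≥0∞) := by
  have hcand : ts.gstar t.2.2 ≤ ((a + ts.cost t.2.1 : NNReal) : ℝ≥0∞) := by
    calc ts.gstar t.2.2 ≤ ts.gstar t.1 + (ts.cost t.2.1 : ℝ≥0∞) := gstar_step ts ht
      _ ≤ (a : ℝ≥0∞) + (ts.cost t.2.1 : ℝ≥0∞) := by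
          gcongr; exact hge t.1 a p h1
      _ = ((a + ts.cost t.2.1 : NNReal) : ℝ≥0∞) := by push_cast; ring
  cases h2 : c.par t.2.2 with
  | none => rw [gNew_eq_cand_of_none ts h1 h2]; exact hcand
  | some z =>
    obtain ⟨go, p'⟩ := z
    rw [gNew, parUpd_target_old ts h1 h2]
    split
    · simpa [-ENNReal.some_eq_coe] using hcand
    · simpa [-ENNReal.some_eq_coe] using hge t.2.2 go p' h2

/-- `procSucc` preserves the invariant. -/
lemma procSucc_inv {c : AConfig S L I} {t : Tran S L} {SET : S → Prop}
    (hsafe : DynSafe ts σh h)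
    (hI : Inv ts σh c SET) (ht : t ∈ ts.trans) (ht1 : t.1 ∈ c.known) :
    Inv ts σh (procSucc ts σh h c t) SET := by
  obtain ⟨K, hKreach, hKsub⟩ := hI.reach
  have hps : (c.par t.1).isSome := (hI.parDom t.1).mpr ht1
  obtain ⟨⟨a, p⟩, h1⟩ : ∃ z, c.par t.1 = some z := Option.isSome_iff_exists.mp hps
  obtain ⟨q, hstored⟩ := parUpd_target_some ts h1
  -- facts common to all branches
  have hreach' : ∃ K', σh.ReachWith (σh.update c.info t) K' ∧
      insert t.2.2 c.known ⊆ K' :=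
    ⟨insert t.2.2 K, InfoSource.ReachWith.update hKreach ht (hKsub ht1),
      Set.insert_subset_insert hKsub⟩
  have hparDom' : ∀ x : S, (parUpd ts c.par t x).isSome ↔ x ∈ insert t.2.2 c.known := by
    intro x
    by_cases hx : x = t.2.2
    · subst hx; simp [hstored]
    · rw [parUpd_ne ts hx]
      simp [hI.parDom x, hx]
  have hparGe' : ∀ x : S, ∀ g p, parUpd ts c.par t x = some (g, p) →
      ts.gstar x ≤ (g : ℝ≥0∞) := by
    intro x g p' hxp
    by_cases hx : x = t.2.2
    · subst hx
      rw [hstored] at hxp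
      obtain ⟨rfl, rfl⟩ : gNew ts c t = g ∧ q = p' := by
        constructor <;> injection hxp with h' <;> [exact congrArg Prod.fst h';
          exact congrArg Prod.snd h']
      exact gNew_ge ts ht h1 hI.parGe
    · rw [parUpd_ne ts hx] at hxp
      exact hI.parGe x g p' hxp
  -- safety fact
  have hsafety : h t.2.2 (σh.update c.info t) = ⊤ → ts.hstar t.2.2 = ⊤ := fun htop =>
    hsafe t.2.2 _ ⟨_, hreach'.choose_spec.1⟩ htop
  by_cases htop : h t.2.2 (σh.update c.info t) = ⊤
  · rw [procSucc_eq_top ts σh h htop]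
    refine ⟨hreach', ?_, hparDom', hparGe', hI.closedKnown.trans (Set.subset_insert _ _), ?_⟩
    · exact fun en hen => Set.subset_insert _ _ (hI.openKnown en hen)
    · intro x hxk hxfin hgx
      by_cases hx : x = t.2.2
      · exact absurd (hsafety (hx ▸ htop)) (hx ▸ hxfin)
      · have hgof : gOf ⟨insert t.2.2 c.known, c.closed, c.openq, parUpd ts c.par t,
            σh.update c.info t⟩ x = gOf c x := by
          simp [gOf, parUpd_ne ts hx]
        rw [hgof] at hgx
        have hxk' : x ∈ c.known := by
          rcases Set.mem_insert_iff.mp hxk with h' | h'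
          · exact absurd h' hx
          · exact h'
        exact hI.main x hxk' hxfin hgx
  · have hmemknown : ∀ x ∈ insert t.2.2 c.known, x ≠ t.2.2 → x ∈ c.known := by
      intro x hxk hx
      rcases Set.mem_insert_iff.mp hxk with h' | h'
      · exact absurd h' hx
      · exact h'
    have hgofne : ∀ (cl : Set S) (oq : Multiset (Entry S)) (x : S), x ≠ t.2.2 →
        gOf ⟨insert t.2.2 c.known, cl, oq, parUpd ts c.par t, σh.update c.info t⟩ x
          = gOf c x := by
      intro cl oq x hx; simp [gOf, parUpd_ne ts hx]
    have hgoftgt : ∀ (cl : Set S) (oq : Multiset (Entry S)),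
        gOf ⟨insert t.2.2 c.known, cl, oq, parUpd ts c.par t, σh.update c.info t⟩ t.2.2
          = gNew ts c t := by
      intro cl oq; exact gOf_eq_of_par hstored
    by_cases hk : t.2.2 ∈ c.known
    · obtain ⟨⟨go, p'⟩, h2⟩ : ∃ z, c.par t.2.2 = some z :=
        Option.isSome_iff_exists.mp ((hI.parDom t.2.2).mpr hk)
      have hgoc : gOf c t.2.2 = go := gOf_eq_of_par h2
      by_cases hlt : gNew ts c t < gOf c t.2.2
      · rw [procSucc_eq_lt ts σh h htop hk hlt]
        refine ⟨hreach', ?_, hparDom', hparGe',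
          (Set.diff_subset.trans hI.closedKnown).trans (Set.subset_insert _ _), ?_⟩
        · intro en hen
          rcases Multiset.mem_cons.mp hen with h' | h'
          · rw [h']; exact Set.mem_insert _ _
          · exact Set.subset_insert _ _ (hI.openKnown en h')
        · intro x hxk hxfin hgx
          by_cases hx : x = t.2.2
          · subst hx
            refine Or.inr ⟨by simp, ⟨gNew ts c t, h t.2.2 (σh.update c.info t), Multiset.mem_cons_self _ _, ?_⟩⟩
            rw [hgoftgt] at hgx; exact hgx
          · rw [hgofne _ _ x hx] at hgx
            rcases hI.main x (hmemknown x hxk hx) hxfin hgx with ⟨hc, hs⟩ | ⟨hc, g', hv', hmem, hg'⟩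
            · exact Or.inl ⟨Set.mem_diff_of_mem hc (by simpa using hx), hs⟩
            · exact Or.inr ⟨fun hmem' => hc hmem'.1,
                ⟨g', hv', Multiset.mem_cons_of_mem hmem, hg'⟩⟩
      · rw [procSucc_eq_ge ts σh h htop hk hlt]
        refine ⟨hreach', ?_, hparDom', hparGe',
          hI.closedKnown.trans (Set.subset_insert _ _), ?_⟩
        · exact fun en hen => Set.subset_insert _ _ (hI.openKnown en hen)
        · intro x hxk hxfin hgx
          by_cases hx : x = t.2.2
          · subst hx
            rw [hgoftgt] at hgx
            have heq : gNew ts c t = gOf c t.2.2 := by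
              have hle : gNew ts c t ≤ go := gNew_le ts h1 h2
              exact le_antisymm (hgoc ▸ hle) (not_lt.mp hlt)
            rw [heq] at hgx
            exact hI.main _ hk hxfin hgx
          · rw [hgofne _ _ x hx] at hgx
            exact hI.main x (hmemknown x hxk hx) hxfin hgx
    · rw [procSucc_eq_new ts σh h htop hk]
      refine ⟨hreach', ?_, hparDom', hparGe',
        hI.closedKnown.trans (Set.subset_insert _ _), ?_⟩
      · intro en hen
        rcases Multiset.mem_cons.mp hen with h' | h'
        · rw [h']; exact Set.mem_insert _ _
        · exact Set.subset_insert _ _ (hI.openKnown en h')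
      · intro x hxk hxfin hgx
        by_cases hx : x = t.2.2
        · subst hx
          refine Or.inr ⟨fun hcl => hk (hI.closedKnown hcl),
            ⟨gNew ts c t, h t.2.2 (σh.update c.info t), Multiset.mem_cons_self _ _, ?_⟩⟩
          rw [hgoftgt] at hgx; exact hgx
        · rw [hgofne _ _ x hx] at hgx
          rcases hI.main x (hmemknown x hxk hx) hxfin hgx with ⟨hc, hs⟩ | ⟨hc, g', hv', hmem, hg'⟩
          · exact Or.inl ⟨hc, hs⟩
          · exact Or.inr ⟨hc, ⟨g', hv', Multiset.mem_cons_of_mem hmem, hg'⟩⟩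

end Stmt9Aux

namespace Stmt9Aux

variable {S L I : Type} (ts : TransSys S L) (σh : InfoSource ts I) (h : S → I → ℝ≥0∞)

/-- `procSucc` preserves knownness and optimal stored g-values. -/
lemma procSucc_P {c : AConfig S L I} {t : Tran S L} {SET : S → Prop} {x : S}
    (hI : Inv ts σh c SET) (ht : t ∈ ts.trans) (ht1 : t.1 ∈ c.known)
    (hx : x ∈ c.known) (hg : (gOf c x : ℝ≥0∞) = ts.gstar x) :
    x ∈ (procSucc ts σh h c t).known ∧
      (gOf (procSucc ts σh h c t) x : ℝ≥0∞) = ts.gstar x := by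
  obtain ⟨hkn, hpar, -, -, -, -, -⟩ := procSucc_fields ts σh h c t
  have hxk' : x ∈ (procSucc ts σh h c t).known := by
    rw [hkn]; exact Set.subset_insert _ _ hx
  refine ⟨hxk', ?_⟩
  obtain ⟨⟨a, p⟩, h1⟩ : ∃ z, c.par t.1 = some z :=
    Option.isSome_iff_exists.mp ((hI.parDom t.1).mpr ht1)
  by_cases hxt : x = t.2.2
  · subst hxt
    obtain ⟨⟨go, p'⟩, h2⟩ : ∃ z, c.par t.2.2 = some z :=
      Option.isSome_iff_exists.mp ((hI.parDom t.2.2).mpr hx)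
    obtain ⟨q, hstored⟩ := parUpd_target_some ts h1
    have hgof' : gOf (procSucc ts σh h c t) t.2.2 = gNew ts c t := by
      simp [gOf, hpar, hstored, Option.getD]
    have hgoc : gOf c t.2.2 = go := gOf_eq_of_par h2
    have hle : gNew ts c t ≤ go := gNew_le ts h1 h2
    have hge : ts.gstar t.2.2 ≤ (gNew ts c t : ℝ≥0∞) := gNew_ge ts ht h1 hI.parGe
    rw [hgof']
    refine le_antisymm ?_ hge
    calc (gNew ts c t : ℝ≥0∞) ≤ (go : ℝ≥0∞) := by exact_mod_cast hle
      _ = ts.gstar t.2.2 := by rw [← hg, hgoc]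
  · have : gOf (procSucc ts σh h c t) x = gOf c x := by
      simp [gOf, hpar, parUpd_ne ts hxt]
    rw [this]; exact hg

/-- Processing the final transition of an optimal path settles the target's
g-value to `g*`. -/
lemma procSucc_opt {c : AConfig S L I} {t : Tran S L} {SET : S → Prop}
    (hI : Inv ts σh c SET) (ht : t ∈ ts.trans) (ht1 : t.1 ∈ c.known)
    (hg : (gOf c t.1 : ℝ≥0∞) = ts.gstar t.1)
    (hsum : ts.gstar t.1 + (ts.cost t.2.1 : ℝ≥0∞) = ts.gstar t.2.2) :
    t.2.2 ∈ (procSucc ts σh h c t).known ∧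
      (gOf (procSucc ts σh h c t) t.2.2 : ℝ≥0∞) = ts.gstar t.2.2 := by
  obtain ⟨hkn, hpar, -, -, -, -, -⟩ := procSucc_fields ts σh h c t
  obtain ⟨⟨a, p⟩, h1⟩ : ∃ z, c.par t.1 = some z :=
    Option.isSome_iff_exists.mp ((hI.parDom t.1).mpr ht1)
  obtain ⟨q, hstored⟩ := parUpd_target_some ts h1
  refine ⟨by rw [hkn]; exact Set.mem_insert _ _, ?_⟩
  have hgof' : gOf (procSucc ts σh h c t) t.2.2 = gNew ts c t := by
    simp [gOf, hpar, hstored, Option.getD]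
  have ha : (a : ℝ≥0∞) = ts.gstar t.1 := by rw [← hg, gOf_eq_of_par h1]
  have hcand : ((a + ts.cost t.2.1 : NNReal) : ℝ≥0∞) = ts.gstar t.2.2 := by
    push_cast; rw [ha]; exact hsum
  rw [hgof']
  cases h2 : c.par t.2.2 with
  | none => rw [gNew_eq_cand_of_none ts h1 h2]; exact hcand
  | some z =>
    obtain ⟨go, p'⟩ := z
    have hgo : ts.gstar t.2.2 ≤ (go : ℝ≥0∞) := hI.parGe t.2.2 go p' h2
    rw [gNew, parUpd_target_old ts h1 h2]
    split
    · simpa [-ENNReal.some_eq_coe] using hcand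
    · next hlt =>
      exfalso
      have : (go : ℝ≥0∞) < ((a + ts.cost t.2.1 : NNReal) : ℝ≥0∞) := by
        exact_mod_cast not_le.mp hlt
      rw [hcand] at this
      exact absurd hgo (not_le.mpr this)

/-- Folding `procSucc` over successor transitions preserves the invariant,
knownness, and optimal stored g-values. -/
lemma expandAll_P {SET : S → Prop} (hsafe : DynSafe ts σh h) (s0 : S)
    (l : List (Tran S L)) :
    ∀ c : AConfig S L I, Inv ts σh c SET → s0 ∈ c.known →
    (∀ t ∈ l, t ∈ ts.trans ∧ t.1 = s0) →
    Inv ts σh (expandAll ts σh h c l) SET ∧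
      c.known ⊆ (expandAll ts σh h c l).known ∧
      (∀ x ∈ c.known, (gOf c x : ℝ≥0∞) = ts.gstar x →
        (gOf (expandAll ts σh h c l) x : ℝ≥0∞) = ts.gstar x) := by
  induction l with
  | nil => intro c hI _ _; exact ⟨hI, le_refl _, fun x _ hg => hg⟩
  | cons t l ih =>
    intro c hI hs0 hl
    obtain ⟨ht, ht1⟩ := hl t List.mem_cons_self
    have ht1' : t.1 ∈ c.known := ht1 ▸ hs0
    have hI' : Inv ts σh (procSucc ts σh h c t) SET :=
      procSucc_inv ts σh h hsafe hI ht ht1'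
    obtain ⟨hkn, hpar, -, -, -, -, -⟩ := procSucc_fields ts σh h c t
    have hs0' : s0 ∈ (procSucc ts σh h c t).known := by
      rw [hkn]; exact Set.subset_insert _ _ hs0
    have hstep : expandAll ts σh h c (t :: l) = expandAll ts σh h (procSucc ts σh h c t) l := by
      simp [expandAll]
    obtain ⟨hI'', hsub, hP⟩ := ih (procSucc ts σh h c t) hI' hs0'
      (fun t' ht' => hl t' (List.mem_cons_of_mem _ ht'))
    rw [hstep]
    refine ⟨hI'', ?_, ?_⟩
    · intro x hx
      exact hsub ((hkn ▸ Set.subset_insert _ _) hx)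
    · intro x hx hg
      obtain ⟨hx', hg'⟩ := procSucc_P ts σh h hI ht ht1' hx hg
      exact hP x hx' hg'

end Stmt9Aux

namespace Stmt9Aux

variable {S L I : Type} (ts : TransSys S L) (σh : InfoSource ts I) (h : S → I → ℝ≥0∞)

lemma init_inv (hsafe : DynSafe ts σh h) (SET : S → Prop) :
    Inv ts σh (initAConfig ts σh h) SET := by
  constructor
  · exact ⟨{ts.init}, InfoSource.ReachWith.base, le_refl _⟩
  · intro en hen
    simp only [initAConfig] at hen
    split at hen
    · simp at hen
    · rw [Multiset.mem_singleton] at hen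
      rw [hen]; rfl
  · intro x
    simp only [initAConfig]
    by_cases hx : x = ts.init <;> simp [hx]
  · intro x g p hp
    simp only [initAConfig] at hp
    split at hp
    · next hx =>
      subst hx
      obtain ⟨rfl, rfl⟩ : (0 : NNReal) = g ∧ (none : Option (Tran S L)) = p := by
        constructor <;> injection hp with h' <;> [exact congrArg Prod.fst h';
          exact congrArg Prod.snd h']
      simpa using gstar_init_le ts
    · exact absurd hp (by simp)
  · intro x hx; exact absurd hx (Set.notMem_empty x)
  · intro x hxk hxfin hgx
    have hx : x = ts.init := hxk
    subst hx
    refine Or.inr ⟨Set.notMem_empty _, ?_⟩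
    by_cases htop : h ts.init σh.initInfo = ⊤
    · exact absurd (hsafe ts.init σh.initInfo ⟨{ts.init}, InfoSource.ReachWith.base⟩ htop) hxfin
    · refine ⟨0, h ts.init σh.initInfo, ?_, ?_⟩
      · simp only [initAConfig, if_neg htop]
        exact Multiset.mem_singleton_self _
      · have : gOf (initAConfig ts σh h) ts.init = 0 := by
          simp [gOf, initAConfig, Option.getD]
        rw [this] at hgx
        exact hgx

/-- The configuration at the start of an expansion satisfies the invariant with
the updated settled-predicate. -/
lemma expand_c1_inv {c : AConfig S L I} {en : Entry S} {rest : Multiset (Entry S)}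
    {SET SET' : S → Prop}
    (hI : Inv ts σh c SET) (hc : c.openq = en ::ₘ rest) (hnc : en.1 ∉ c.closed)
    (hmono : ∀ x, SET x → SET' x)
    (hexp : (gOf c en.1 : ℝ≥0∞) = ts.gstar en.1 → SET' en.1) :
    Inv ts σh
      { c with openq := rest, closed := insert en.1 c.closed,
               info := σh.refine c.info en.1 } SET' := by
  have henk : en.1 ∈ c.known := hI.openKnown en (by rw [hc]; exact Multiset.mem_cons_self _ _)
  obtain ⟨K, hKreach, hKsub⟩ := hI.reach
  constructor
  · exact ⟨K, InfoSource.ReachWith.refine hKreach (hKsub henk), hKsub⟩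
  · intro en' hen'
    exact hI.openKnown en' (by rw [hc]; exact Multiset.mem_cons_of_mem hen')
  · exact hI.parDom
  · exact hI.parGe
  · exact Set.insert_subset henk hI.closedKnown
  · intro x hxk hxfin hgx
    rcases hI.main x hxk hxfin hgx with ⟨hcl, hs⟩ | ⟨hncl, g, hv, hmem, hgv⟩
    · exact Or.inl ⟨Set.mem_insert_of_mem _ hcl, hmono x hs⟩
    · by_cases hx : x = en.1
      · subst hx
        exact Or.inl ⟨Set.mem_insert _ _, hexp hgx⟩
      · refine Or.inr ⟨?_, g, hv, ?_, hgv⟩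
        · intro hmem'
          rcases Set.mem_insert_iff.mp hmem' with h' | h'
          · exact hx h'
          · exact hncl h'
        · rw [hc] at hmem
          rcases Multiset.mem_cons.mp hmem with h' | h'
          · exact absurd (congrArg Prod.fst h') hx
          · exact h'

/-- One iteration of dynA* preserves the invariant. -/
lemma step_inv {reeval : Bool} {c c' : AConfig S L I} {la : ALab S L}
    {SET SET' : S → Prop}
    (hsafe : DynSafe ts σh h)
    (hI : Inv ts σh c SET)
    (hstep : AStep ts σh h reeval c la (.cont c'))
    (hmono : ∀ x, SET x → SET' x)
    (hexp : ∀ en, la = .expand en → (gOf c en.1 : ℝ≥0∞) = ts.gstar en.1 → SET' en.1) :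
    Inv ts σh c' SET' := by
  obtain ⟨K, hKreach, hKsub⟩ := hI.reach
  cases hstep with
  | dup hc hmin hcl =>
    rename_i en rest
    constructor
    · exact ⟨K, hKreach, hKsub⟩
    · intro en' hen'
      exact hI.openKnown en' (by rw [hc]; exact Multiset.mem_cons_of_mem hen')
    · exact hI.parDom
    · exact hI.parGe
    · exact hI.closedKnown
    · intro x hxk hxfin hgx
      rcases hI.main x hxk hxfin hgx with ⟨hcl', hs⟩ | ⟨hncl, g, hv, hmem, hgv⟩
      · exact Or.inl ⟨hcl', hmono x hs⟩
      · refine Or.inr ⟨hncl, g, hv, ?_, hgv⟩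
        rw [hc] at hmem
        rcases Multiset.mem_cons.mp hmem with h' | h'
        · have hx : x = en.1 := congrArg Prod.fst h'
          exact absurd hcl (hx ▸ hncl)
        · exact h'
  | reevFin hc hmin hncl hre hlt hnt =>
    rename_i en rest
    have henk : en.1 ∈ c.known :=
      hI.openKnown en (by rw [hc]; exact Multiset.mem_cons_self _ _)
    constructor
    · exact ⟨K, InfoSource.ReachWith.refine hKreach (hKsub henk), hKsub⟩
    · intro en' hen'
      rcases Multiset.mem_cons.mp hen' with h' | h'
      · rw [h']; exact henk
      · exact hI.openKnown en' (by rw [hc]; exact Multiset.mem_cons_of_mem h')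
    · exact hI.parDom
    · exact hI.parGe
    · exact hI.closedKnown
    · intro x hxk hxfin hgx
      rcases hI.main x hxk hxfin hgx with ⟨hcl', hs⟩ | ⟨hncl', g, hv, hmem, hgv⟩
      · exact Or.inl ⟨hcl', hmono x hs⟩
      · refine Or.inr ⟨hncl', ?_⟩
        rw [hc] at hmem
        rcases Multiset.mem_cons.mp hmem with h' | h'
        · have hx : x = en.1 := congrArg Prod.fst h'
          subst hx
          exact ⟨gOf c en.1, h en.1 (σh.refine c.info en.1), Multiset.mem_cons_self _ _, hgx⟩
        · exact ⟨g, hv, Multiset.mem_cons_of_mem h', hgv⟩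
  | reevInf hc hmin hncl hre hlt htop =>
    rename_i en rest
    have henk : en.1 ∈ c.known :=
      hI.openKnown en (by rw [hc]; exact Multiset.mem_cons_self _ _)
    constructor
    · exact ⟨K, InfoSource.ReachWith.refine hKreach (hKsub henk), hKsub⟩
    · intro en' hen'
      exact hI.openKnown en' (by rw [hc]; exact Multiset.mem_cons_of_mem hen')
    · exact hI.parDom
    · exact hI.parGe
    · exact hI.closedKnown
    · intro x hxk hxfin hgx
      rcases hI.main x hxk hxfin hgx with ⟨hcl', hs⟩ | ⟨hncl', g, hv, hmem, hgv⟩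
      · exact Or.inl ⟨hcl', hmono x hs⟩
      · refine Or.inr ⟨hncl', ?_⟩
        rw [hc] at hmem
        rcases Multiset.mem_cons.mp hmem with h' | h'
        · have hx : x = en.1 := congrArg Prod.fst h'
          subst hx
          exact absurd (hsafe en.1 (σh.refine c.info en.1)
            ⟨K, InfoSource.ReachWith.refine hKreach (hKsub henk)⟩ htop) hxfin
        · exact ⟨g, hv, h', hgv⟩
  | expand hc hmin hncl hnre hng hsl =>
    rename_i en rest l
    have henk : en.1 ∈ c.known :=
      hI.openKnown en (by rw [hc]; exact Multiset.mem_cons_self _ _)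
    have hI1 := expand_c1_inv ts σh hI hc hncl hmono (hexp en rfl)
    exact (expandAll_P ts σh h hsafe en.1 l _ hI1 henk
      (fun t' ht' => ((hsl.2 t').mp ht'))).1

/-- One iteration of dynA* preserves knownness and optimal stored g-values. -/
lemma step_P {reeval : Bool} {c c' : AConfig S L I} {la : ALab S L} {SET : S → Prop}
    {x : S}
    (hsafe : DynSafe ts σh h)
    (hI : Inv ts σh c SET)
    (hstep : AStep ts σh h reeval c la (.cont c'))
    (hx : x ∈ c.known) (hg : (gOf c x : ℝ≥0∞) = ts.gstar x) :
    x ∈ c'.known ∧ (gOf c' x : ℝ≥0∞) = ts.gstar x := by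
  cases hstep with
  | dup hc hmin hcl => exact ⟨hx, hg⟩
  | reevFin hc hmin hncl hre hlt hnt => exact ⟨hx, hg⟩
  | reevInf hc hmin hncl hre hlt htop => exact ⟨hx, hg⟩
  | expand hc hmin hncl hnre hng hsl =>
    rename_i en rest l
    have henk : en.1 ∈ c.known :=
      hI.openKnown en (by rw [hc]; exact Multiset.mem_cons_self _ _)
    have hI1 := expand_c1_inv ts σh (SET' := fun y =>
        SET y ∨ ((gOf c y : ℝ≥0∞) = ts.gstar y ∧ y = en.1)) hI hc hncl
      (fun y hy => Or.inl hy) (fun hgy => Or.inr ⟨hgy, rfl⟩)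
    obtain ⟨-, hsub, hP⟩ := expandAll_P ts σh h hsafe en.1 l _ hI1 henk
      (fun t' ht' => ((hsl.2 t').mp ht'))
    exact ⟨hsub hx, hP x hx hg⟩

end Stmt9Aux

theorem stmt9 {S L I : Type} [Fintype S] [Fintype L]
    (ts : TransSys S L) (σh : InfoSource ts I) (h : S → I → ℝ≥0∞)
    (hsafe : DynSafe ts σh h) (reeval : Bool)
    (e : ℕ → AConfig S L I) (lab : ℕ → ALab S L) (N : ℕ)
    (hexec : IsExec ts σh h reeval e lab N)
    (n : ℕ) (hn : n ≤ N) (s s' : S) (ℓ : L) (π : List (Tran S L))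
    (hsettled : SettledAt ts e lab n s)
    (hfin : ts.hstar s' ≠ ⊤)
    (hpath : ts.IsPathFrom ts.init (π ++ [(s, ℓ, s')]) s')
    (hopt : (ts.pathCost (π ++ [(s, ℓ, s')]) : ℝ≥0∞) = ts.gstar s') :
    (∃ g : NNReal, ∃ hv : ℝ≥0∞,
        (s', g, hv) ∈ (e n).openq ∧ (g : ℝ≥0∞) = ts.gstar s') ∨
    SettledAt ts e lab n s' := by
  classical
  obtain ⟨hinit, hsteps⟩ := hexec
  -- the master invariant holds at the beginning of every iteration
  have key : ∀ k, k ≤ N → Stmt9Aux.Inv ts σh (e k) (SettledAt ts e lab k) := by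
    intro k
    induction k with
    | zero => intro _; rw [hinit]; exact Stmt9Aux.init_inv ts σh h hsafe _
    | succ k ih =>
      intro hk
      have hk' : k < N := Nat.lt_of_succ_le hk
      refine Stmt9Aux.step_inv ts σh h hsafe (ih (Nat.le_of_lt hk')) (hsteps k hk') ?_ ?_
      · rintro x ⟨m', hm', en', h1, h2, h3⟩
        exact ⟨m', Nat.lt_succ_of_lt hm', en', h1, h2, h3⟩
      · intro en hla hg
        exact ⟨k, Nat.lt_succ_self k, en, hla, rfl, hg⟩
  obtain ⟨m, hmn, en, hlabm, hen1, hgm⟩ := hsettled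
  subst hen1
  have hmN : m < N := lt_of_lt_of_le hmn hn
  have hstep := hsteps m hmN
  rw [hlabm] at hstep
  -- path facts
  obtain ⟨mid, hpmid, hlast⟩ := Stmt9Aux.isPathFrom_append_split ts hpath
  have hts : (en.1, ℓ, s') ∈ ts.trans ∧ ts.IsPathFrom ts.init π en.1 := by
    cases hlast with
    | cons htr htail => cases htail; exact ⟨htr, hpmid⟩
  obtain ⟨ht, hps⟩ := hts
  have hsum : ts.gstar en.1 + (ts.cost ℓ : ℝ≥0∞) = ts.gstar s' := by
    have h1 : ts.gstar s' ≤ ts.gstar en.1 + (ts.cost ℓ : ℝ≥0∞) := by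
      simpa using Stmt9Aux.gstar_step ts (t := (en.1, ℓ, s')) ht
    have h2 : ts.gstar en.1 + (ts.cost ℓ : ℝ≥0∞) ≤ ts.gstar s' := by
      rw [← hopt, Stmt9Aux.pathCost_append]
      have hc : ts.pathCost [(en.1, ℓ, s')] = ts.cost ℓ := by simp [TransSys.pathCost]
      rw [hc]
      push_cast
      gcongr
      exact Stmt9Aux.gstar_le_pathCost ts hps
    exact le_antisymm h2 h1
  -- iteration m: expansion of en.1
  generalize he : e (m + 1) = cnext at hstep
  cases hstep with
  | expand hc hmin hncl hnre hng hsl =>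
    rename_i rest l
    have hIm := key m (le_of_lt hmN)
    have henk : en.1 ∈ (e m).known :=
      hIm.openKnown en (by rw [hc]; exact Multiset.mem_cons_self _ _)
    have hI1 := Stmt9Aux.expand_c1_inv ts σh (SET' := SettledAt ts e lab (m + 1))
      hIm hc hncl
      (by rintro x ⟨m', hm', en', h1, h2, h3⟩
          exact ⟨m', Nat.lt_succ_of_lt hm', en', h1, h2, h3⟩)
      (fun hg => ⟨m, Nat.lt_succ_self m, en, hlabm, rfl, hg⟩)
    set c₁ : AConfig S L I :=
      { e m with openq := rest, closed := insert en.1 (e m).closed,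
                 info := σh.refine (e m).info en.1 } with hc₁
    set t : Tran S L := (en.1, ℓ, s') with htdef
    have htl : t ∈ l := (hsl.2 t).mpr ⟨ht, rfl⟩
    obtain ⟨l₁, l₂, rfl⟩ := List.append_of_mem htl
    have hl₁ : ∀ t' ∈ l₁, t' ∈ ts.trans ∧ t'.1 = en.1 :=
      fun t' ht' => (hsl.2 t').mp (List.mem_append_left _ ht')
    have hl₂ : ∀ t' ∈ l₂, t' ∈ ts.trans ∧ t'.1 = en.1 :=
      fun t' ht' => (hsl.2 t').mp (List.mem_append_right _ (List.mem_cons_of_mem _ ht'))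
    have hs0k : en.1 ∈ c₁.known := henk
    have hg1 : (gOf c₁ en.1 : ℝ≥0∞) = ts.gstar en.1 := hgm
    obtain ⟨hI2, hsub2, hP2⟩ :=
      Stmt9Aux.expandAll_P ts σh h hsafe en.1 l₁ c₁ hI1 hs0k hl₁
    set c₂ := expandAll ts σh h c₁ l₁ with hc₂
    have hs0k2 : en.1 ∈ c₂.known := hsub2 hs0k
    have hg2 : (gOf c₂ en.1 : ℝ≥0∞) = ts.gstar en.1 := hP2 en.1 hs0k hg1
    obtain ⟨hs'3, hg3⟩ := Stmt9Aux.procSucc_opt ts σh h hI2 ht hs0k2 hg2 hsum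
    have hI3 := Stmt9Aux.procSucc_inv ts σh h hsafe hI2 ht hs0k2
    set c₃ := procSucc ts σh h c₂ t with hc₃
    have hs0k3 : en.1 ∈ c₃.known := by
      obtain ⟨hkn, -, -, -, -, -, -⟩ := Stmt9Aux.procSucc_fields ts σh h c₂ t
      rw [hc₃, hkn]; exact Set.subset_insert _ _ hs0k2
    obtain ⟨hI4, hsub4, hP4⟩ :=
      Stmt9Aux.expandAll_P ts σh h hsafe en.1 l₂ c₃ hI3 hs0k3 hl₂
    have hfold : e (m + 1) = expandAll ts σh h c₃ l₂ := by
      have h' : expandAll ts σh h c₁ (l₁ ++ t :: l₂)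
          = expandAll ts σh h c₃ l₂ := by
        rw [hc₃, hc₂]; simp [expandAll, List.foldl_append]
      rw [he, ← h']
    have hup0 : s' ∈ (e (m + 1)).known ∧ (gOf (e (m + 1)) s' : ℝ≥0∞) = ts.gstar s' := by
      rw [hfold]
      exact ⟨hsub4 hs'3, hP4 s' hs'3 hg3⟩
    -- propagate from m+1 to n
    have up : ∀ k, m + 1 ≤ k → k ≤ n →
        s' ∈ (e k).known ∧ (gOf (e k) s' : ℝ≥0∞) = ts.gstar s' := by
      intro k hk1
      induction k, hk1 using Nat.le_induction with
      | base => intro _; exact hup0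
      | succ k hk ihk =>
        intro hkn'
        have hkn'' : k ≤ n := Nat.le_of_succ_le hkn'
        have hkN : k < N := Nat.lt_of_lt_of_le (Nat.lt_of_succ_le hkn') hn
        obtain ⟨h1, h2⟩ := ihk hkn''
        exact Stmt9Aux.step_P ts σh h hsafe (key k (le_of_lt hkN)) (hsteps k hkN) h1 h2
    obtain ⟨hk, hg⟩ := up n (Nat.succ_le_of_lt hmn) (le_refl n)
    rcases (key n hn).main s' hk hfin hg with ⟨-, hset⟩ | ⟨-, g, hv, hmem, hgv⟩
    · exact Or.inr hset
    · exact Or.inl ⟨g, hv, hmem, hgv⟩
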